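/- arXiv:2502.06449 — 5 statements merged into one kernel-verified Lean document; each statement's English description precedes it below -/
import Mathlib

section
/- The theta function θ_Δ(τ) = (1/2) ∑_{n ∈ 1/2+ℤ} q^{n²/4} (with q = e^{2πiτ}, τ in the upper half-plane) equals the eta quotient η(τ)²/η(τ/2), where η is the Dedekind eta function. -/
/-!
With `q = e^{πiτ/2}` one has `θ_Δ(τ) = ½ q^{1/4} ∑_{m ∈ ℤ} q^{m² + m}`, `η(τ) = q^{1/6} (q⁴; q⁴)_∞`
and `η(τ/2) = q^{1/12} (q²; q²)_∞`. The sum is the Jacobi triple product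
`∑ q^{m²} z^m = ∏ (1 - q^{2k+2}) (1 + z q^{2k+1}) (1 + z⁻¹ q^{2k+1})` at `z = q`, namely
`2 (q²; q²)_∞ (-q²; q²)_∞²`, and `(q²; q²)_∞ (-q²; q²)_∞ = (q⁴; q⁴)_∞` gives the eta quotient.

The triple product is the limit `n → ∞` of its finite form
`∏_{k<n} (1 + z q^{2k+1}) (1 + z⁻¹ q^{2k+1}) = ∑_{|m| ≤ n} [2n, n+m]_{q²} q^{m²} z^m`,
which is Cauchy's `q`-binomial theorem after the substitution `y = z q^{1-2n}`. The limit is taken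
term by term (Tannery's theorem): `[2n, n+m]_{q²} → 1 / (q²; q²)_∞`, and the Gaussian binomial
coefficients are uniformly bounded because `[a+b, a]_p = (p; p)_{a+b} / ((p; p)_a (p; p)_b)`
and `(p; p)_N` converges to a nonzero limit.
-/

open Complex Real

/-- The Dedekind eta function `η(τ) = e^{πiτ/12} ∏_{n≥1} (1 - e^{2πinτ})`. -/
noncomputable def dedekindEta (τ : ℂ) : ℂ :=
  Complex.exp (π * Complex.I * τ / 12) *
    ∏' n : ℕ, (1 - Complex.exp (2 * π * Complex.I * ((n : ℂ) + 1) * τ))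

/-- `θ_Δ(τ) = (1/2) ∑_{n ∈ 1/2+ℤ} q^{n²/4}` with `q = e^{2πiτ}`. -/
noncomputable def thetaTriangle (τ : ℂ) : ℂ :=
  (1 / 2 : ℂ) *
    ∑' n : ℤ, Complex.exp (2 * π * Complex.I * τ * (((n : ℂ) + 1 / 2) ^ 2 / 4))

open Filter Finset Topology

section GaussBinom

variable {R : Type*}

/-- The Gaussian binomial coefficient `[N, j]_p`. -/
def gaussBinom [CommSemiring R] (p : R) : ℕ → ℕ → R
  | _, 0 => 1
  | 0, _ + 1 => 0
  | N + 1, j + 1 => p ^ (j + 1) * gaussBinom p N (j + 1) + gaussBinom p N j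

section CommSemiring

variable [CommSemiring R] (p : R)

@[simp]
theorem gaussBinom_zero_right (N : ℕ) : gaussBinom p N 0 = 1 := by
  cases N <;> rfl

theorem gaussBinom_succ_succ (N j : ℕ) :
    gaussBinom p (N + 1) (j + 1) = p ^ (j + 1) * gaussBinom p N (j + 1) + gaussBinom p N j :=
  rfl

theorem gaussBinom_eq_zero_of_lt {N j : ℕ} (h : N < j) : gaussBinom p N j = 0 := by
  induction N generalizing j with
  | zero => obtain ⟨j, rfl⟩ : ∃ i, j = i + 1 := ⟨j - 1, by omega⟩; rfl
  | succ N ih =>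
    obtain ⟨j, rfl⟩ : ∃ i, j = i + 1 := ⟨j - 1, by omega⟩
    rw [gaussBinom_succ_succ, ih (by omega), ih (by omega), mul_zero, add_zero]

@[simp]
theorem gaussBinom_self (N : ℕ) : gaussBinom p N N = 1 := by
  induction N with
  | zero => rfl
  | succ N ih => rw [gaussBinom_succ_succ, ih, gaussBinom_eq_zero_of_lt p N.lt_succ_self]; simp

/-- Cauchy's `q`-binomial theorem. -/
theorem prod_one_add_mul_pow (N : ℕ) (y : R) :
    ∏ k ∈ range N, (1 + y * p ^ k) =
      ∑ j ∈ range (N + 1), gaussBinom p N j * p ^ j.choose 2 * y ^ j := by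
  induction N generalizing y with
  | zero => simp
  | succ N ih =>
    have hshift (j : ℕ) : p ^ (j + 1).choose 2 = p ^ j.choose 2 * p ^ j := by
      rw [Nat.choose_succ_succ', Nat.choose_one_right, pow_add, mul_comm]
    have hlow : ∑ j ∈ range (N + 1), gaussBinom p N j * p ^ j.choose 2 * (y * p) ^ j =
        ∑ j ∈ range (N + 1), p ^ (j + 1) * gaussBinom p N (j + 1) * p ^ (j + 1).choose 2 *
          y ^ (j + 1) + 1 := by
      rw [sum_range_succ', sum_range_succ _ N, gaussBinom_eq_zero_of_lt p N.lt_succ_self]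
      simp only [mul_zero, zero_mul, add_zero, pow_zero, mul_one, gaussBinom_zero_right,
        Nat.choose_zero_succ]
      exact congrArg (· + 1) (sum_congr rfl fun j _ => by ring)
    have hhigh : ∑ j ∈ range (N + 1), gaussBinom p N j * p ^ j.choose 2 * (y * p) ^ j * y =
        ∑ j ∈ range (N + 1), gaussBinom p N j * p ^ (j + 1).choose 2 * y ^ (j + 1) :=
      sum_congr rfl fun j _ => by rw [hshift]; ring
    simp_rw [prod_range_succ', pow_succ', ← mul_assoc]
    rw [ih, pow_zero, mul_one, sum_range_succ' _ (N + 1), mul_add, mul_one, sum_mul, hlow, hhigh]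
    simp only [gaussBinom_succ_succ, add_mul, sum_add_distrib, gaussBinom_zero_right,
      Nat.choose_zero_succ, pow_zero, mul_one]
    ring

end CommSemiring

section CommRing

variable [CommRing R] (p : R)

/-- The `q`-Pochhammer symbol `(p; p)_N`. -/
def qPochhammer (N : ℕ) : R := ∏ k ∈ range N, (1 - p ^ (k + 1))

theorem qPochhammer_succ (N : ℕ) : qPochhammer p (N + 1) = qPochhammer p N * (1 - p ^ (N + 1)) :=
  prod_range_succ _ _

theorem gaussBinom_add_mul_qPochhammer (a b : ℕ) :
    gaussBinom p (a + b) a * qPochhammer p a * qPochhammer p b = qPochhammer p (a + b) := by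
  induction a generalizing b with
  | zero => simp [qPochhammer]
  | succ a iha =>
    induction b with
    | zero => simp [qPochhammer]
    | succ b ihb =>
      have hb := iha (b + 1)
      rw [show a + (b + 1) = a + b + 1 by omega, qPochhammer_succ p b] at hb
      rw [show a + 1 + b = a + b + 1 by omega, qPochhammer_succ p a] at ihb
      rw [show a + 1 + (b + 1) = a + b + 1 + 1 by omega, gaussBinom_succ_succ, qPochhammer_succ p a,
        qPochhammer_succ p b, qPochhammer_succ p (a + b + 1)]
      linear_combination p ^ (a + 1) * (1 - p ^ (b + 1)) * ihb + (1 - p ^ (a + 1)) * hb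

end CommRing

end GaussBinom

theorem two_mul_choose_two_add_self (j : ℕ) : 2 * j.choose 2 + j = j ^ 2 := by
  induction j with
  | zero => rfl
  | succ j ih => rw [Nat.choose_succ_succ', Nat.choose_one_right]; linear_combination ih

section FiniteTripleProduct

variable {K : Type*} [Field K] {q z : K}

theorem prod_range_mul_zpow_neg_odd (hq : q ≠ 0) (n : ℕ) :
    ∏ i ∈ range n, z * q ^ (-(2 * i + 1 : ℤ)) = z ^ n * q ^ (-(n ^ 2 : ℤ)) := by
  induction n with
  | zero => simp
  | succ n ih =>
    rw [prod_range_succ, ih, pow_succ, mul_mul_mul_comm, ← zpow_add₀ hq]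
    push_cast
    ring_nf

theorem prod_range_two_mul_one_add_mul_zpow (hq : q ≠ 0) (hz : z ≠ 0) (n : ℕ) :
    ∏ k ∈ range (2 * n), (1 + z * q ^ (1 - 2 * n : ℤ) * (q ^ 2) ^ k) =
      z ^ n * q ^ (-(n ^ 2 : ℤ)) *
        ∏ k ∈ range n, (1 + z * q ^ (2 * k + 1)) * (1 + z⁻¹ * q ^ (2 * k + 1)) := by
  have hlow : ∏ k ∈ range n, (1 + z * q ^ (1 - 2 * n : ℤ) * (q ^ 2) ^ k) =
      ∏ k ∈ range n, z * q ^ (-(2 * k + 1 : ℤ)) * (1 + z⁻¹ * q ^ (2 * k + 1)) := by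
    rw [← prod_range_reflect]
    refine prod_congr rfl fun k hk => ?_
    have hfactor :
        z * q ^ (1 - 2 * n : ℤ) * (q ^ 2) ^ (n - 1 - k) = z * q ^ (-(2 * k + 1 : ℤ)) := by
      rw [← pow_mul, ← zpow_natCast, mul_assoc, ← zpow_add₀ hq]
      congr 2
      simp only [mem_range] at hk
      omega
    rw [hfactor, mul_add, mul_one, add_comm, mul_mul_mul_comm, mul_inv_cancel₀ hz, one_mul,
      ← zpow_natCast, ← zpow_add₀ hq]
    simp
  have hhigh : ∏ k ∈ range n, (1 + z * q ^ (1 - 2 * n : ℤ) * (q ^ 2) ^ (n + k)) =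
      ∏ k ∈ range n, (1 + z * q ^ (2 * k + 1)) := by
    refine prod_congr rfl fun k _ => ?_
    rw [← pow_mul, ← zpow_natCast, mul_assoc, ← zpow_add₀ hq, ← zpow_natCast]
    congr 3
    push_cast
    ring
  rw [two_mul, prod_range_add, hlow, hhigh, prod_mul_distrib, prod_range_mul_zpow_neg_odd hq,
    prod_mul_distrib]
  ring

theorem sum_range_gaussBinom_mul_zpow (hq : q ≠ 0) (hz : z ≠ 0) (n : ℕ) :
    ∑ j ∈ range (2 * n + 1),
        gaussBinom (q ^ 2) (2 * n) j * (q ^ 2) ^ j.choose 2 * (z * q ^ (1 - 2 * n : ℤ)) ^ j =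
      z ^ n * q ^ (-(n ^ 2 : ℤ)) *
        ∑ m ∈ Icc (-n : ℤ) n, gaussBinom (q ^ 2) (2 * n) (m + n).toNat * q ^ (m ^ 2) * z ^ m := by
  rw [mul_sum]
  refine sum_nbij' (fun j => (j - n : ℤ)) (fun m => (m + n).toNat) ?_ ?_ ?_ ?_ ?_ <;>
    intro j hj <;> simp only [mem_range, mem_Icc] at hj ⊢
  all_goals try omega
  rw [show ((j - n : ℤ) + n).toNat = j by omega]
  have hchoose : (2 * j.choose 2 + j : ℤ) = j ^ 2 := mod_cast two_mul_choose_two_add_self j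
  have hzpow : z ^ n * z ^ ((j : ℤ) - n) = z ^ j := by
    rw [← zpow_natCast, ← zpow_add₀ hz]
    simp
  have hqpow : (q ^ 2) ^ j.choose 2 * q ^ ((1 - 2 * n : ℤ) * j) =
      q ^ (-(n ^ 2 : ℤ)) * q ^ ((j - n : ℤ) ^ 2) := by
    rw [← pow_mul, ← zpow_natCast, ← zpow_add₀ hq, ← zpow_add₀ hq]
    congr 1
    push_cast
    linear_combination hchoose
  rw [mul_pow, ← zpow_natCast (q ^ (1 - 2 * n : ℤ)), ← zpow_mul]
  linear_combination (gaussBinom (q ^ 2) (2 * n) j * z ^ j) * hqpow -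
    (gaussBinom (q ^ 2) (2 * n) j * q ^ (-(n ^ 2 : ℤ)) * q ^ ((j - n : ℤ) ^ 2)) * hzpow

/-- The finite form of the Jacobi triple product. -/
theorem sum_Icc_gaussBinom_mul_zpow (hq : q ≠ 0) (hz : z ≠ 0) (n : ℕ) :
    ∑ m ∈ Icc (-n : ℤ) n, gaussBinom (q ^ 2) (2 * n) (m + n).toNat * q ^ (m ^ 2) * z ^ m =
      ∏ k ∈ range n, (1 + z * q ^ (2 * k + 1)) * (1 + z⁻¹ * q ^ (2 * k + 1)) := by
  have h := prod_one_add_mul_pow (q ^ 2) (2 * n) (z * q ^ (1 - 2 * n : ℤ))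
  rw [prod_range_two_mul_one_add_mul_zpow hq hz, sum_range_gaussBinom_mul_zpow hq hz] at h
  exact (mul_left_cancel₀ (by positivity) h).symm

end FiniteTripleProduct

section Convergence

variable {p : ℂ}

theorem norm_pow_lt_one (hp : ‖p‖ < 1) {k : ℕ} (hk : k ≠ 0) : ‖p ^ k‖ < 1 := by
  rw [norm_pow]
  exact pow_lt_one₀ (norm_nonneg p) hp hk

theorem one_sub_pow_ne_zero (hp : ‖p‖ < 1) {k : ℕ} (hk : k ≠ 0) : 1 - p ^ k ≠ 0 := by
  refine sub_ne_zero.2 fun h => ?_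
  have := norm_pow_lt_one hp hk
  rw [← h, norm_one] at this
  exact this.false

theorem qPochhammer_ne_zero (hp : ‖p‖ < 1) (N : ℕ) : qPochhammer p N ≠ 0 :=
  prod_ne_zero_iff.2 fun _ _ => one_sub_pow_ne_zero hp (Nat.succ_ne_zero _)

theorem tprod_one_sub_pow_ne_zero (hp : ‖p‖ < 1) : ∏' k : ℕ, (1 - p ^ (k + 1)) ≠ 0 := by
  simp_rw [sub_eq_add_neg]
  refine tprod_one_add_ne_zero_of_summable (fun k => ?_) ?_
  · rw [← sub_eq_add_neg]; exact one_sub_pow_ne_zero hp (Nat.succ_ne_zero k)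
  · simpa [norm_pow] using
      (summable_nat_add_iff 1).2 (summable_geometric_of_lt_one (norm_nonneg p) hp)

theorem tendsto_qPochhammer (hp : ‖p‖ < 1) :
    Tendsto (qPochhammer p) atTop (𝓝 (∏' k : ℕ, (1 - p ^ (k + 1)))) :=
  (ModularForm.multipliable_one_sub_pow hp).hasProd.tendsto_prod_nat

theorem gaussBinom_add_eq (hp : ‖p‖ < 1) (a b : ℕ) :
    gaussBinom p (a + b) a = qPochhammer p (a + b) * (qPochhammer p a)⁻¹ * (qPochhammer p b)⁻¹ := by
  rw [eq_mul_inv_iff_mul_eq₀ (qPochhammer_ne_zero hp b),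
    eq_mul_inv_iff_mul_eq₀ (qPochhammer_ne_zero hp a), mul_right_comm,
    gaussBinom_add_mul_qPochhammer]

theorem exists_norm_gaussBinom_le (hp : ‖p‖ < 1) : ∃ C, ∀ N j, ‖gaussBinom p N j‖ ≤ C := by
  have hlim := tendsto_qPochhammer hp
  obtain ⟨C₁, hC₁⟩ := isBounded_iff_forall_norm_le.1 (Metric.isBounded_range_of_tendsto _ hlim)
  obtain ⟨C₂, hC₂⟩ := isBounded_iff_forall_norm_le.1
    (Metric.isBounded_range_of_tendsto _ (hlim.inv₀ (tprod_one_sub_pow_ne_zero hp)))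
  have hC₁' (N : ℕ) : ‖qPochhammer p N‖ ≤ C₁ := hC₁ _ ⟨N, rfl⟩
  have hC₂' (N : ℕ) : ‖(qPochhammer p N)⁻¹‖ ≤ C₂ := hC₂ _ ⟨N, rfl⟩
  have hC₁0 : 0 ≤ C₁ := (norm_nonneg _).trans (hC₁' 0)
  have hC₂0 : 0 ≤ C₂ := (norm_nonneg _).trans (hC₂' 0)
  refine ⟨C₁ * C₂ * C₂, fun N j => ?_⟩
  rcases le_or_gt j N with hjN | hNj
  · obtain ⟨b, rfl⟩ := Nat.exists_eq_add_of_le hjN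
    rw [gaussBinom_add_eq hp, norm_mul, norm_mul]
    exact mul_le_mul (mul_le_mul (hC₁' _) (hC₂' _) (norm_nonneg _) hC₁0) (hC₂' _) (norm_nonneg _)
      (mul_nonneg hC₁0 hC₂0)
  · rw [gaussBinom_eq_zero_of_lt p hNj, norm_zero]
    positivity

theorem tendsto_gaussBinom (hp : ‖p‖ < 1) :
    Tendsto (fun ab : ℕ × ℕ => gaussBinom p (ab.1 + ab.2) ab.1) (atTop ×ˢ atTop)
      (𝓝 (∏' k : ℕ, (1 - p ^ (k + 1)))⁻¹) := by
  have hlim := tendsto_qPochhammer hp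
  have hne := tprod_one_sub_pow_ne_zero hp
  have hsum : Tendsto (fun ab : ℕ × ℕ => ab.1 + ab.2) (atTop ×ˢ atTop) atTop :=
    tendsto_atTop_mono (fun ab => Nat.le_add_right ab.1 ab.2) tendsto_fst
  have h := ((hlim.comp hsum).mul ((hlim.comp tendsto_fst).inv₀ hne)).mul
    ((hlim.comp tendsto_snd).inv₀ hne)
  rw [mul_inv_cancel₀ hne, one_mul] at h
  exact h.congr fun ab => (gaussBinom_add_eq hp ab.1 ab.2).symm

theorem tendsto_toNat_add_const_atTop (m : ℤ) : Tendsto (fun n : ℕ => (n + m).toNat) atTop atTop :=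
  tendsto_atTop.2 fun b => (eventually_ge_atTop (b + m.natAbs)).mono fun n hn => by omega

theorem tendsto_gaussBinom_two_mul (hp : ‖p‖ < 1) (m : ℤ) :
    Tendsto (fun n : ℕ => gaussBinom p (2 * n) (m + n).toNat) atTop
      (𝓝 (∏' k : ℕ, (1 - p ^ (k + 1)))⁻¹) := by
  refine ((tendsto_gaussBinom hp).comp ((tendsto_toNat_add_const_atTop m).prodMk
    (tendsto_toNat_add_const_atTop (-m)))).congr' ?_
  filter_upwards [eventually_ge_atTop m.natAbs] with n hn
  rw [Function.comp_apply, show (n + m).toNat + (n + -m).toNat = 2 * n by omega, add_comm m]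

end Convergence

section TripleProduct

variable {q z : ℂ}

theorem summable_norm_pow_sq_mul_pow (hq : ‖q‖ < 1) (w : ℂ) :
    Summable fun n : ℕ => ‖q ^ (n ^ 2) * w ^ n‖ := by
  have h : Tendsto (fun n : ℕ => ‖q‖ ^ n * ‖w‖) atTop (𝓝 0) := by
    simpa using (tendsto_pow_atTop_nhds_zero_of_lt_one (norm_nonneg _) hq).mul_const ‖w‖
  refine Summable.of_norm_bounded_eventually_nat summable_geometric_two ?_
  filter_upwards [h.eventually_le_const (by norm_num : (0 : ℝ) < 1 / 2)] with n hn
  rw [norm_norm, norm_mul, norm_pow, norm_pow, sq, pow_mul, ← mul_pow]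
  exact pow_le_pow_left₀ (by positivity) hn n

theorem summable_norm_zpow_sq_mul_zpow (hq : ‖q‖ < 1) (w : ℂ) :
    Summable fun m : ℤ => ‖q ^ (m ^ 2) * w ^ m‖ := by
  refine Summable.of_nat_of_neg ?_ ?_
  · refine (summable_norm_pow_sq_mul_pow hq w).congr fun n => ?_
    rw [← zpow_natCast, ← zpow_natCast w, Nat.cast_pow]
  · refine (summable_norm_pow_sq_mul_pow hq w⁻¹).congr fun n => ?_
    rw [← zpow_natCast, ← zpow_natCast w⁻¹, Nat.cast_pow, neg_sq, zpow_neg, inv_zpow]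

theorem multipliable_one_add_mul_pow_odd (hq : ‖q‖ < 1) (c : ℂ) :
    Multipliable fun k : ℕ => 1 + c * q ^ (2 * k + 1) := by
  refine Complex.multipliable_one_add_of_summable
    (((summable_geometric_of_norm_lt_one (norm_pow_lt_one hq two_ne_zero)).mul_left
      (c * q)).congr fun k => ?_)
  ring

theorem hasProd_jacobi_triple_product (hq : ‖q‖ < 1) (hq0 : q ≠ 0) (hz : z ≠ 0) :
    HasProd (fun k : ℕ => (1 - (q ^ 2) ^ (k + 1)) *
        ((1 + z * q ^ (2 * k + 1)) * (1 + z⁻¹ * q ^ (2 * k + 1))))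
      (∑' m : ℤ, q ^ (m ^ 2) * z ^ m) := by
  have hp := norm_pow_lt_one hq two_ne_zero
  have hL := (ModularForm.multipliable_one_sub_pow hp).hasProd
  have hP := ((multipliable_one_add_mul_pow_odd hq z).mul
    (multipliable_one_add_mul_pow_odd hq z⁻¹)).hasProd
  set L := ∏' k : ℕ, (1 - (q ^ 2) ^ (k + 1))
  set P := ∏' k : ℕ, (1 + z * q ^ (2 * k + 1)) * (1 + z⁻¹ * q ^ (2 * k + 1))
  suffices L * P = ∑' m : ℤ, q ^ (m ^ 2) * z ^ m from this ▸ hL.mul hP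
  set F : ℕ → ℤ → ℂ := fun n m => if m ∈ Icc (-n : ℤ) n then
    gaussBinom (q ^ 2) (2 * n) (m + n).toNat * (q ^ (m ^ 2) * z ^ m) else 0
  have hF (n : ℕ) : ∑' m, F n m =
      ∏ k ∈ range n, (1 + z * q ^ (2 * k + 1)) * (1 + z⁻¹ * q ^ (2 * k + 1)) := by
    rw [tsum_eq_sum (s := Icc (-n : ℤ) n) fun m hm => if_neg hm,
      ← sum_Icc_gaussBinom_mul_zpow hq0 hz]
    exact sum_congr rfl fun m hm => by rw [if_pos hm, mul_assoc]
  have hpartial : Tendsto (fun n => ∑' m, F n m) atTop (𝓝 P) := by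
    simpa only [hF] using hP.tendsto_prod_nat
  obtain ⟨C, hC⟩ := exists_norm_gaussBinom_le hp
  have hdom : Tendsto (fun n => ∑' m, F n m) atTop
      (𝓝 (∑' m : ℤ, L⁻¹ * (q ^ (m ^ 2) * z ^ m))) := by
    refine tendsto_tsum_of_dominated_convergence
      ((summable_norm_zpow_sq_mul_zpow hq z).mul_left C) (fun m => ?_)
      (Eventually.of_forall fun n m => ?_)
    · refine ((tendsto_gaussBinom_two_mul hp m).mul_const _).congr' ?_
      filter_upwards [eventually_ge_atTop m.natAbs] with n hn
      exact (if_pos (mem_Icc.2 ⟨by omega, by omega⟩)).symm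
    · simp only [F]
      split_ifs
      · rw [norm_mul]
        exact mul_le_mul_of_nonneg_right (hC _ _) (norm_nonneg _)
      · rw [norm_zero]
        exact mul_nonneg ((norm_nonneg _).trans (hC 0 0)) (norm_nonneg _)
  rw [tsum_mul_left] at hdom
  rw [← tendsto_nhds_unique hdom hpartial, mul_inv_cancel_left₀ (tprod_one_sub_pow_ne_zero hp)]

theorem tsum_zpow_sq_mul_zpow_self_mul_tprod (hq : ‖q‖ < 1) (hq0 : q ≠ 0) :
    (∑' m : ℤ, q ^ (m ^ 2) * q ^ m) * ∏' k : ℕ, (1 - (q ^ 2) ^ (k + 1)) =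
      2 * (∏' k : ℕ, (1 - (q ^ 4) ^ (k + 1))) ^ 2 := by
  have hp := norm_pow_lt_one hq two_ne_zero
  have hB := (ModularForm.multipliable_one_sub_pow hp).hasProd
  have hH := (Complex.multipliable_one_add_of_summable
    ((summable_nat_add_iff 1).2 (summable_geometric_of_norm_lt_one hp))).hasProd
  set B := ∏' k : ℕ, (1 - (q ^ 2) ^ (k + 1))
  set H := ∏' k : ℕ, (1 + (q ^ 2) ^ (k + 1))
  have hH₀ : HasProd (fun k : ℕ => 1 + (q ^ 2) ^ k) (2 * H) := by
    simpa [one_add_one_eq_two] using hH.zero_mul (f := fun k : ℕ => 1 + (q ^ 2) ^ k)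
  have hA : ∏' k : ℕ, (1 - (q ^ 4) ^ (k + 1)) = B * H := by
    refine (hB.mul hH).tprod_eq ▸ tprod_congr fun k => ?_
    ring
  have hS : ∑' m : ℤ, q ^ (m ^ 2) * q ^ m = B * (H * (2 * H)) := by
    refine (hasProd_jacobi_triple_product hq hq0 hq0).unique ?_
    convert hB.mul (hH.mul hH₀) using 1
    ext k
    rw [← pow_succ', pow_succ' q (2 * k), inv_mul_cancel_left₀ hq0, ← pow_mul, ← pow_mul]
    ring_nf
  rw [hS, hA]
  ring

end TripleProduct

theorem thetaTriangle_eq_mul_tsum (τ : ℂ) :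
    thetaTriangle τ = cexp (π * I * τ / 8) *
      (∑' m : ℤ, cexp (π * I * τ / 2) ^ (m ^ 2) * cexp (π * I * τ / 2) ^ m) / 2 := by
  have hterm (m : ℤ) : cexp (2 * π * I * τ * ((m + 1 / 2) ^ 2 / 4)) =
      cexp (π * I * τ / 8) * (cexp (π * I * τ / 2) ^ (m ^ 2) * cexp (π * I * τ / 2) ^ m) := by
    rw [← Complex.exp_int_mul, ← Complex.exp_int_mul, ← Complex.exp_add, ← Complex.exp_add]
    push_cast
    ring_nf
  rw [thetaTriangle, tsum_congr hterm, tsum_mul_left]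
  ring

theorem dedekindEta_eq_mul_tprod (τ : ℂ) :
    dedekindEta τ = cexp (π * I * τ / 12) * ∏' k : ℕ, (1 - cexp (2 * π * I * τ) ^ (k + 1)) := by
  refine congrArg _ (tprod_congr fun k => ?_)
  rw [← Complex.exp_nat_mul]
  push_cast
  ring_nf

/-- `θ_Δ(τ) = η(τ)² / η(τ/2)` for `τ` in the upper half-plane. -/
theorem thetaTriangle_eq_eta_quotient (τ : ℂ) (hτ : 0 < τ.im) :
    thetaTriangle τ = dedekindEta τ ^ 2 / dedekindEta (τ / 2) := by
  set q := cexp (π * I * τ / 2)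
  have hq : ‖q‖ < 1 := by
    have hre : (π * I * τ / 2).re = -(π * τ.im) / 2 := by simp
    rw [Complex.norm_exp, Real.exp_lt_one_iff, hre]
    exact div_neg_of_neg_of_pos (neg_neg_of_pos (by positivity)) two_pos
  have hq0 : q ≠ 0 := Complex.exp_ne_zero _
  have hq4 : cexp (2 * π * I * τ) = q ^ 4 := by rw [← Complex.exp_nat_mul]; ring_nf
  have hq2 : cexp (2 * π * I * (τ / 2)) = q ^ 2 := by rw [← Complex.exp_nat_mul]; ring_nf
  have hexp : cexp (π * I * τ / 8) * cexp (π * I * (τ / 2) / 12) = cexp (π * I * τ / 12) ^ 2 := by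
    rw [← Complex.exp_nat_mul, ← Complex.exp_add]
    ring_nf
  have hB := tprod_one_sub_pow_ne_zero (norm_pow_lt_one hq two_ne_zero)
  rw [thetaTriangle_eq_mul_tsum, dedekindEta_eq_mul_tprod, dedekindEta_eq_mul_tprod, hq4, hq2,
    eq_div_iff (mul_ne_zero (Complex.exp_ne_zero _) hB)]
  linear_combination
    (cexp (π * I * τ / 12) ^ 2 / 2) * tsum_zpow_sq_mul_zpow_self_mul_tprod hq hq0 +
    ((∑' m : ℤ, q ^ (m ^ 2) * q ^ m) * (∏' k : ℕ, (1 - (q ^ 2) ^ (k + 1))) / 2) * hexp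
end

section
/- The Dedekind eta function satisfies the half-integer shift identity η(τ + 1/2) = e^{πi/24} η(2τ)³ / (η(τ) η(4τ)) for all τ in the upper half-plane. -/
open Complex Real

/-!
With `q = e^{2πiτ}` we have `η(τ) = e^{πiτ/12} φ(q)` for Euler's function
`φ(x) = ∏_{n ≥ 1} (1 - xⁿ)`, and `τ ↦ τ + 1/2` replaces `q` by `-q`, so the identity reduces to
`φ(-x) φ(x) φ(x⁴) = φ(x²)³` for `‖x‖ < 1`. Splitting the factors of `φ(-x)` and of
`ψ(x) = ∏_{n ≥ 1} (1 + xⁿ)` according to the parity of `n` gives `φ(-x) = Ω φ(x²)` and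
`ψ(x) = Ω ψ(x²)` with `Ω = ∏_{k ≥ 0} (1 + x^{2k+1})`, while `φ(x) ψ(x) = φ(x²)` factor by factor;
eliminating `Ω` and `ψ` yields the identity.
-/

lemma norm_pow_lt_one_s3 {R : Type*} [NormedRing R] {x : R} (hx : ‖x‖ < 1) {n : ℕ} (hn : n ≠ 0) :
    ‖x ^ n‖ < 1 :=
  (norm_pow_le' x (Nat.pos_of_ne_zero hn)).trans_lt (pow_lt_one₀ (norm_nonneg x) hx hn)

lemma summable_norm_pow_succ {R : Type*} [NormedRing R] {x : R} (hx : ‖x‖ < 1) :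
    Summable fun n : ℕ => ‖x ^ (n + 1)‖ :=
  .of_nonneg_of_le (fun _ => norm_nonneg _) (fun n => norm_pow_le' x n.succ_pos)
    ((summable_nat_add_iff 1).mpr (summable_geometric_of_lt_one (norm_nonneg _) hx))

lemma tprod_one_add_eq_even_mul_odd {R : Type*} [NormedCommRing R] [NormOneClass R]
    [CompleteSpace R] {f : ℕ → R} (hf : Summable (‖f ·‖)) :
    ∏' n, (1 + f n) = (∏' k, (1 + f (2 * k))) * ∏' k, (1 + f (2 * k + 1)) := by
  have h_even : Function.Injective fun k : ℕ => 2 * k := fun _ _ h => by simp_all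
  have h_odd : Function.Injective fun k : ℕ => 2 * k + 1 := fun _ _ h => by simp_all
  have h_even' : Multipliable fun k => 1 + f (2 * k) :=
    multipliable_one_add_of_summable (hf.comp_injective h_even)
  have h_odd' : Multipliable fun k => 1 + f (2 * k + 1) :=
    multipliable_one_add_of_summable (hf.comp_injective h_odd)
  exact (tprod_even_mul_odd (f := fun n => 1 + f n) h_even' h_odd').symm

noncomputable def eulerFunction {R : Type*} [CommRing R] [TopologicalSpace R] (x : R) : R :=
  ∏' n : ℕ, (1 - x ^ (n + 1))

section EulerFunction

variable {R : Type*} [NormedCommRing R] [NormOneClass R] [CompleteSpace R] {x : R}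

lemma multipliable_one_add_pow_succ (hx : ‖x‖ < 1) :
    Multipliable fun n : ℕ => 1 + x ^ (n + 1) :=
  multipliable_one_add_of_summable (summable_norm_pow_succ hx)

lemma multipliable_one_sub_pow_succ (hx : ‖x‖ < 1) :
    Multipliable fun n : ℕ => 1 - x ^ (n + 1) := by
  simpa [sub_eq_add_neg] using multipliable_one_add_of_summable (f := fun n => -x ^ (n + 1))
    (by simpa using summable_norm_pow_succ hx)

lemma eulerFunction_mul_tprod_one_add_pow_succ (hx : ‖x‖ < 1) :
    eulerFunction x * ∏' n : ℕ, (1 + x ^ (n + 1)) = eulerFunction (x ^ 2) := by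
  rw [eulerFunction, eulerFunction,
    ← (multipliable_one_sub_pow_succ hx).tprod_mul (multipliable_one_add_pow_succ hx)]
  exact tprod_congr fun n => by ring

lemma tprod_one_add_pow_succ_eq (hx : ‖x‖ < 1) :
    ∏' n : ℕ, (1 + x ^ (n + 1)) =
      (∏' k : ℕ, (1 + x ^ (2 * k + 1))) * ∏' k : ℕ, (1 + (x ^ 2) ^ (k + 1)) := by
  rw [tprod_one_add_eq_even_mul_odd (summable_norm_pow_succ hx)]
  congr 1
  exact tprod_congr fun k => by ring

lemma eulerFunction_neg (hx : ‖x‖ < 1) :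
    eulerFunction (-x) = (∏' k : ℕ, (1 + x ^ (2 * k + 1))) * eulerFunction (x ^ 2) := by
  have hf : Summable fun n : ℕ => ‖-(-x) ^ (n + 1)‖ := by
    simpa using summable_norm_pow_succ (x := -x) (by simpa using hx)
  rw [eulerFunction, eulerFunction]
  simp_rw [sub_eq_add_neg]
  rw [tprod_one_add_eq_even_mul_odd hf]
  congr 1 <;> refine tprod_congr fun k => ?_
  · rw [Odd.neg_pow ⟨k, rfl⟩]; ring
  · rw [Even.neg_pow ⟨k + 1, by ring⟩]; ring

theorem eulerFunction_neg_mul_mul (hx : ‖x‖ < 1) :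
    eulerFunction (-x) * eulerFunction x * eulerFunction (x ^ 4) =
      eulerFunction (x ^ 2) ^ 3 := by
  have h_neg := eulerFunction_neg hx
  have h_split := tprod_one_add_pow_succ_eq hx
  have h_sq := eulerFunction_mul_tprod_one_add_pow_succ hx
  have h_sq' := eulerFunction_mul_tprod_one_add_pow_succ (norm_pow_lt_one_s3 hx two_ne_zero)
  rw [← pow_mul] at h_sq'
  set Ω := ∏' k : ℕ, (1 + x ^ (2 * k + 1))
  linear_combination (eulerFunction x * eulerFunction (x ^ 4)) * h_neg
    - Ω * eulerFunction x * eulerFunction (x ^ 2) * h_sq'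
    - eulerFunction x * eulerFunction (x ^ 2) ^ 2 * h_split + eulerFunction (x ^ 2) ^ 2 * h_sq

end EulerFunction

lemma eulerFunction_ne_zero {𝕜 : Type*} [NormedField 𝕜] [CompleteSpace 𝕜] {x : 𝕜}
    (hx : ‖x‖ < 1) : eulerFunction x ≠ 0 := by
  have h_factor (n : ℕ) : 1 + -x ^ (n + 1) ≠ 0 := by
    rw [← sub_eq_add_neg, sub_ne_zero]
    exact fun h => (norm_pow_lt_one_s3 hx n.succ_ne_zero).ne (by rw [← h, norm_one])
  simpa [eulerFunction, sub_eq_add_neg] using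
    tprod_one_add_ne_zero_of_summable h_factor (by simpa using summable_norm_pow_succ hx)

lemma dedekindEta_eq_exp_mul_eulerFunction (τ : ℂ) :
    dedekindEta τ = cexp (π * I * τ / 12) * eulerFunction (cexp (2 * π * I * τ)) := by
  rw [dedekindEta, eulerFunction]
  congr 1
  refine tprod_congr fun n => ?_
  rw [← Complex.exp_nat_mul]
  push_cast
  ring_nf

lemma dedekindEta_nat_mul (n : ℕ) (τ : ℂ) :
    dedekindEta (n * τ) =
      cexp (π * I * τ / 12) ^ n * eulerFunction (cexp (2 * π * I * τ) ^ n) := by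
  rw [dedekindEta_eq_exp_mul_eulerFunction, ← Complex.exp_nat_mul, ← Complex.exp_nat_mul]
  ring_nf

lemma dedekindEta_add_half (τ : ℂ) :
    dedekindEta (τ + 1 / 2) =
      cexp (π * I / 24) * cexp (π * I * τ / 12) * eulerFunction (-cexp (2 * π * I * τ)) := by
  have h_exp : cexp (2 * π * I * (τ + 1 / 2)) = -cexp (2 * π * I * τ) := by
    rw [mul_add, Complex.exp_add, show 2 * π * I * (1 / 2 : ℂ) = π * I by ring,
      Complex.exp_pi_mul_I, mul_neg_one]
  rw [dedekindEta_eq_exp_mul_eulerFunction, h_exp, ← Complex.exp_add]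
  ring_nf

/-- Half-integer shift identity: `η(τ + 1/2) = e^{πi/24} η(2τ)³ / (η(τ) η(4τ))`. -/
theorem dedekindEta_half_shift (τ : ℂ) (hτ : 0 < τ.im) :
    dedekindEta (τ + 1 / 2) =
      Complex.exp (π * Complex.I / 24) * dedekindEta (2 * τ) ^ 3 /
        (dedekindEta τ * dedekindEta (4 * τ)) := by
  have hq : ‖cexp (2 * π * I * τ)‖ < 1 := UpperHalfPlane.norm_exp_two_pi_I_lt_one ⟨τ, hτ⟩
  have hφ := eulerFunction_ne_zero hq
  have hφ4 := eulerFunction_ne_zero (norm_pow_lt_one_s3 hq four_ne_zero)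
  have h2 := dedekindEta_nat_mul 2 τ
  have h4 := dedekindEta_nat_mul 4 τ
  push_cast at h2 h4
  rw [dedekindEta_add_half, dedekindEta_eq_exp_mul_eulerFunction τ, h2, h4,
    eq_div_iff (by simp [hφ, hφ4])]
  linear_combination (cexp (π * I / 24) * cexp (π * I * τ / 12) ^ 6) *
    eulerFunction_neg_mul_mul hq
end

section
/- Let A_m(x) = ∏_{1≤i<j≤m} (x_i² - x_j²) and B_m(x) = ∏_{j=1}^m x_j be polynomials in variables x_1, …, x_m. Then ∑_{j=1}^m ∂²/∂x_j² (A_m(x) B_m(x)) = 0, i.e., the product A_m · B_m is a harmonic polynomial in m variables. -/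
/-!
Up to sign, `A_m B_m` is the alternant `det (x_i ^ (2j+1))`, a diagonal matrix times a
Vandermonde matrix in the `x_i²`. The Laplacian of an alternant `det (x_i ^ a_j)` is
`∑_j a_j (a_j - 1) · det (x_i ^ a'_j)` with `a'` equal to `a` except that `a'_j = a_j - 2`. For
`a_j = 2j+1` the term `j = 0` has coefficient `0`, and for `j > 0` the lowered exponent equals
`a_{j-1}`, so the determinant has two equal columns.
-/

open MvPolynomial Finset

namespace MvPolynomial

variable {R σ : Type*}

section CommSemiring

variable [CommSemiring R] [Fintype σ]

lemma prod_X_pow_eq_monomial_equivFunOnFinite (b : σ → ℕ) :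
    ∏ i, X i ^ b i = monomial (Finsupp.equivFunOnFinite.symm b) (1 : R) := by
  simp [monomial_eq, Finsupp.prod_fintype]

lemma pderiv_prod_X_pow [DecidableEq σ] (b : σ → ℕ) (k : σ) :
    pderiv k (∏ i, X i ^ b i : MvPolynomial σ R) =
      b k • ∏ i, X i ^ Function.update b k (b k - 1) i := by
  have : Finsupp.equivFunOnFinite.symm b - Finsupp.single k 1 =
      Finsupp.equivFunOnFinite.symm (Function.update b k (b k - 1)) := by
    ext j
    rcases eq_or_ne j k with rfl | h <;> simp [*]
  rw [prod_X_pow_eq_monomial_equivFunOnFinite, prod_X_pow_eq_monomial_equivFunOnFinite,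
    pderiv_monomial, this, ← map_nsmul]
  simp

variable (R σ) in
noncomputable def laplacian : MvPolynomial σ R →ₗ[R] MvPolynomial σ R :=
  ∑ j, (pderiv j).toLinearMap ∘ₗ (pderiv j).toLinearMap

lemma laplacian_apply (p : MvPolynomial σ R) :
    laplacian R σ p = ∑ j, pderiv j (pderiv j p) := by
  simp [laplacian]

lemma laplacian_prod_X_pow [DecidableEq σ] (b : σ → ℕ) :
    laplacian R σ (∏ i, X i ^ b i) =
      ∑ k, (b k * (b k - 1)) • ∏ i, X i ^ Function.update b k (b k - 2) i := by
  rw [laplacian_apply]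
  refine sum_congr rfl fun k _ => ?_
  rw [pderiv_prod_X_pow, map_nsmul, pderiv_prod_X_pow, smul_smul]
  simp [Nat.sub_sub]

end CommSemiring

section CommRing

variable [CommRing R] [Fintype σ] [DecidableEq σ]

variable (R) in
noncomputable def alternant (a : σ → ℕ) : MvPolynomial σ R :=
  (Matrix.of fun i j => X i ^ a j).det

lemma alternant_eq_sum (a : σ → ℕ) :
    alternant R a = ∑ τ : Equiv.Perm σ, Equiv.Perm.sign τ • ∏ i, X i ^ a (τ i) := by
  rw [alternant, ← Matrix.det_transpose, Matrix.det_apply]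
  rfl

lemma alternant_eq_zero_of_eq (a : σ → ℕ) {i j : σ} (hij : i ≠ j) (h : a i = a j) :
    alternant R a = 0 :=
  Matrix.det_zero_of_column_eq hij fun k => congrArg (X k ^ ·) h

lemma laplacian_alternant (a : σ → ℕ) :
    laplacian R σ (alternant R a) =
      ∑ j, (a j * (a j - 1)) • alternant R (Function.update a j (a j - 2)) := by
  simp_rw [alternant_eq_sum, Units.smul_def, map_sum, map_zsmul, laplacian_prod_X_pow, smul_sum]
  conv_rhs => rw [sum_comm]
  refine sum_congr rfl fun τ _ => ?_
  conv_rhs => rw [← Equiv.sum_comp τ]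
  refine sum_congr rfl fun k _ => ?_
  rw [smul_comm]
  simp only [Function.update_apply_equiv_apply, Equiv.symm_apply_apply, Function.comp_def]

lemma laplacian_alternant_two_mul_add_one (m : ℕ) :
    laplacian R (Fin m) (alternant R fun j : Fin m => 2 * (j : ℕ) + 1) = 0 := by
  rw [laplacian_alternant]
  refine sum_eq_zero fun j _ => ?_
  rcases Nat.eq_zero_or_pos j with hj | hj
  · simp [hj]
  · have hprev : (⟨j - 1, by omega⟩ : Fin m) ≠ j := Fin.ne_of_val_ne (by simp; omega)
    rw [alternant_eq_zero_of_eq _ hprev (by simp [hprev]; omega), smul_zero]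

lemma alternant_two_mul_add_one (m : ℕ) :
    alternant R (fun j : Fin m => 2 * (j : ℕ) + 1) =
      (∏ i, X i) * ∏ i, ∏ j ∈ Ioi i, (X j ^ 2 - X i ^ 2) := by
  have : (Matrix.of fun i j : Fin m => (X i : MvPolynomial (Fin m) R) ^ (2 * (j : ℕ) + 1)) =
      Matrix.diagonal X * Matrix.vandermonde fun i => X i ^ 2 := by
    ext i j : 1
    rw [Matrix.diagonal_mul, Matrix.vandermonde_apply, Matrix.of_apply, ← pow_mul, pow_succ']
  rw [alternant, this, Matrix.det_mul, Matrix.det_diagonal, Matrix.det_vandermonde]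

lemma prod_sq_sub_sq_mul_prod_X (m : ℕ) :
    (∏ i : Fin m, ∏ j ∈ Ioi i, (X i ^ 2 - X j ^ 2)) * ∏ i, X i =
      (∏ i : Fin m, (-1 : R) ^ #(Ioi i)) • alternant R fun j : Fin m => 2 * (j : ℕ) + 1 := by
  have (i : Fin m) : ∏ j ∈ Ioi i, (X i ^ 2 - X j ^ 2 : MvPolynomial (Fin m) R) =
      (-1) ^ #(Ioi i) * ∏ j ∈ Ioi i, (X j ^ 2 - X i ^ 2) := by
    simp_rw [← prod_neg, neg_sub]
  simp_rw [this, prod_mul_distrib, alternant_two_mul_add_one, smul_eq_C_mul, map_prod, map_pow,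
    map_neg, map_one]
  ring

end CommRing

end MvPolynomial

/-- `A_m(x) B_m(x) = ∏_{i<j} (x_i² - x_j²) · ∏_j x_j` is a harmonic polynomial:
`∑_j ∂²/∂x_j² (A_m B_m) = 0`. -/
theorem laplacian_vandermonde_type_product (m : ℕ) :
    ∑ j : Fin m, pderiv j (pderiv j
      ((∏ i : Fin m, ∏ j' ∈ Finset.univ.filter (fun j' => i < j'),
          (X i ^ 2 - X j' ^ 2)) *
        ∏ j' : Fin m, (X j' : MvPolynomial (Fin m) ℝ))) = 0 := by
  rw [← laplacian_apply]
  simp_rw [filter_lt_eq_Ioi]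
  rw [prod_sq_sub_sq_mul_prod_X, map_smul, laplacian_alternant_two_mul_add_one, smul_zero]
end

section
/- For the Weyl vector ρ₀ = ∑_{p=1}^m (m+1-p)ε_p + ∑_{q=1}^m (m+1/2-q)δ_q of the root system Φ₀⁺ of sp(2m)⊕so(2m+1) with pairing (ε_i,ε_i)=1/2=-(δ_j,δ_j) and ε_i, δ_j mutually orthogonal, the product over all positive roots β ∈ Φ₀⁺ of (ρ₀, β) equals (-1)^m 2^{-2m²} (∏_{j=1}^m (2j-1)!)². -/
/-!
Induct on `m`. Shifting every index by one turns the factors for `m + 1` with indices `≥ 1`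
into exactly the factors for `m`, so passing from `m` to `m + 1` only adds the roots involving
index `1`: the pairs `(1, j)`, `2ε₁` and `δ₁`. Their pairings with `ρ₀` multiply to
`-((2m+1)!)² / 2^(4m+2)`, which is also the ratio of consecutive right-hand sides.
-/

open Nat Finset

theorem prod_filter_lt_range_succ {M : Type*} [CommMonoid M] (f : ℕ → ℕ → M) (m : ℕ) :
    ∏ i ∈ range (m + 1), ∏ j ∈ (range (m + 1)).filter (fun j => i < j), f i j =
      (∏ i ∈ range m, ∏ j ∈ (range m).filter (fun j => i < j), f (i + 1) (j + 1)) *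
        ∏ j ∈ range m, f 0 (j + 1) := by
  simp only [prod_filter]
  rw [prod_range_succ']
  simp [prod_range_succ']

theorem prod_range_cast_sub {R : Type*} [CommRing R] (n k : ℕ) (h : k ≤ n) :
    ∏ j ∈ range k, ((n : R) - j) = n.descFactorial k := by
  rw [descFactorial_eq_prod_range, Nat.cast_prod]
  refine prod_congr rfl fun j hj => ?_
  rw [Nat.cast_sub (by simp at hj; omega)]

theorem two_zpow_succ (m : ℕ) :
    (2 : ℚ) ^ (-(2 * ((m + 1 : ℕ) : ℤ) ^ 2)) = 2 ^ (-(2 * (m : ℤ) ^ 2)) / (4 * 16 ^ m) := by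
  have : (4 * 16 ^ m : ℚ) = 2 ^ ((4 * m + 2 : ℕ) : ℤ) := by
    rw [zpow_natCast, pow_add, pow_mul]; norm_num; ring
  rw [this, ← zpow_sub₀ two_ne_zero]
  congr 1
  push_cast
  ring

/-- `(ρ₀, ε_i - ε_j) (ρ₀, ε_i + ε_j) (ρ₀, δ_i - δ_j) (ρ₀, δ_i + δ_j)`, with indices shifted to
start at `0`, as are those of `longRootFactor` (`(ρ₀, 2ε_p)`) and `shortRootFactor` (`(ρ₀, δ_q)`). -/
def pairRootFactor (m i j : ℕ) : ℚ :=
  (((((j : ℚ) + 1) - ((i : ℚ) + 1)) / 2) *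
    ((2 * (m : ℚ) + 2 - ((i : ℚ) + 1) - ((j : ℚ) + 1)) / 2) *
    (((((i : ℚ) + 1) - ((j : ℚ) + 1))) / 2) *
    (((((i : ℚ) + 1) + ((j : ℚ) + 1)) - 2 * (m : ℚ) - 1) / 2))

def longRootFactor (m p : ℕ) : ℚ := (m : ℚ) + 1 - ((p : ℚ) + 1)

def shortRootFactor (m q : ℕ) : ℚ := (2 * ((q : ℚ) + 1) - 2 * (m : ℚ) - 1) / 4

def weylProduct (m : ℕ) : ℚ :=
  (∏ i ∈ range m, ∏ j ∈ (range m).filter (fun j => i < j), pairRootFactor m i j) *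
    (∏ p ∈ range m, longRootFactor m p) * ∏ q ∈ range m, shortRootFactor m q

theorem pairRootFactor_succ_succ (m i j : ℕ) :
    pairRootFactor (m + 1) (i + 1) (j + 1) = pairRootFactor m i j := by
  simp only [pairRootFactor]; push_cast; ring

theorem longRootFactor_succ_succ (m p : ℕ) :
    longRootFactor (m + 1) (p + 1) = longRootFactor m p := by
  simp only [longRootFactor]; push_cast; ring

theorem shortRootFactor_succ_succ (m q : ℕ) :
    shortRootFactor (m + 1) (q + 1) = shortRootFactor m q := by
  simp only [shortRootFactor]; push_cast; ring

theorem longRootFactor_succ_zero (m : ℕ) : longRootFactor (m + 1) 0 = m + 1 := by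
  simp only [longRootFactor]; push_cast; ring

theorem shortRootFactor_succ_zero (m : ℕ) : shortRootFactor (m + 1) 0 = -(2 * m + 1) / 4 := by
  simp only [shortRootFactor]; push_cast; ring

theorem pairRootFactor_succ_zero (m j : ℕ) :
    pairRootFactor (m + 1) 0 (j + 1) =
      ((j : ℚ) + 1) ^ 2 * (((2 * m + 1 : ℕ) : ℚ) - j) * (((2 * m : ℕ) : ℚ) - j) / 16 := by
  simp only [pairRootFactor]; push_cast; ring

theorem prod_pairRootFactor_succ_zero (m : ℕ) :
    ∏ j ∈ range m, pairRootFactor (m + 1) 0 (j + 1) =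
      ((2 * m + 1)! : ℚ) ^ 2 / ((m + 1) * (2 * m + 1) * 16 ^ m) := by
  have h₁ := factorial_mul_descFactorial (show m ≤ 2 * m + 1 by omega)
  have h₂ := factorial_mul_descFactorial (show m ≤ 2 * m by omega)
  rw [show 2 * m + 1 - m = m + 1 by omega, factorial_succ] at h₁
  rw [show 2 * m - m = m by omega] at h₂
  have key : m ! ^ 2 * (2 * m + 1).descFactorial m * (2 * m).descFactorial m *
      ((m + 1) * (2 * m + 1)) = (2 * m + 1)! ^ 2 :=
    calc _ = ((m + 1) * m ! * (2 * m + 1).descFactorial m) *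
          ((2 * m + 1) * (m ! * (2 * m).descFactorial m)) := by ring
      _ = (2 * m + 1)! ^ 2 := by rw [h₁, h₂, ← factorial_succ, sq]
  have hfact : ∏ j ∈ range m, ((j : ℚ) + 1) = m ! := by
    exact_mod_cast prod_range_add_one_eq_factorial m
  simp only [pairRootFactor_succ_zero, prod_div_distrib, prod_mul_distrib, prod_pow,
    prod_const, card_range]
  rw [prod_range_cast_sub _ _ (by omega), prod_range_cast_sub _ _ (by omega), hfact,
    div_eq_div_iff (by positivity) (by positivity)]
  have key_cast := congrArg (Nat.cast : ℕ → ℚ) key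
  push_cast at key_cast
  linear_combination 16 ^ m * key_cast

theorem weylProduct_succ (m : ℕ) :
    weylProduct (m + 1) = weylProduct m * (-((2 * m + 1)! : ℚ) ^ 2 / (4 * 16 ^ m)) := by
  rw [weylProduct, prod_filter_lt_range_succ, prod_range_succ' (longRootFactor _),
    prod_range_succ' (shortRootFactor _)]
  simp only [pairRootFactor_succ_succ, longRootFactor_succ_succ, shortRootFactor_succ_succ,
    prod_pairRootFactor_succ_zero, longRootFactor_succ_zero, shortRootFactor_succ_zero]
  rw [weylProduct]
  field_simp

theorem weyl_vector_product_general (m : ℕ) :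
    (∏ i ∈ Finset.range m, ∏ j ∈ (Finset.range m).filter (fun j => i < j),
        (((((j : ℚ) + 1) - ((i : ℚ) + 1)) / 2) *
          ((2 * (m : ℚ) + 2 - ((i : ℚ) + 1) - ((j : ℚ) + 1)) / 2) *
          (((((i : ℚ) + 1) - ((j : ℚ) + 1))) / 2) *
          (((((i : ℚ) + 1) + ((j : ℚ) + 1)) - 2 * (m : ℚ) - 1) / 2))) *
      (∏ p ∈ Finset.range m, ((m : ℚ) + 1 - ((p : ℚ) + 1))) *
      (∏ k ∈ Finset.range m, ((2 * ((k : ℚ) + 1) - 2 * (m : ℚ) - 1) / 4)) =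
    (-1 : ℚ) ^ m * (2 : ℚ) ^ (-(2 * (m : ℤ) ^ 2)) *
      (∏ j ∈ Finset.range m, ((2 * (j + 1) - 1)! : ℚ)) ^ 2 := by
  change weylProduct m = _
  induction m with
  | zero => simp [weylProduct]
  | succ m ih =>
    rw [weylProduct_succ, ih, two_zpow_succ, prod_range_succ,
      show 2 * (m + 1) - 1 = 2 * m + 1 by omega]
    ring

/-- The product of `(ρ₀, β)` over all positive roots `β ∈ Φ₀⁺`, written out explicitly,
equals `(-1)^m 2^{-2m²} (∏_{j=1}^m (2j-1)!)²`. -/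
theorem weyl_vector_product (m : ℕ) (hm : 0 < m) :
    (∏ i ∈ Finset.range m, ∏ j ∈ (Finset.range m).filter (fun j => i < j),
        (((((j : ℚ) + 1) - ((i : ℚ) + 1)) / 2) *
          ((2 * (m : ℚ) + 2 - ((i : ℚ) + 1) - ((j : ℚ) + 1)) / 2) *
          (((((i : ℚ) + 1) - ((j : ℚ) + 1))) / 2) *
          (((((i : ℚ) + 1) + ((j : ℚ) + 1)) - 2 * (m : ℚ) - 1) / 2))) *
      (∏ p ∈ Finset.range m, ((m : ℚ) + 1 - ((p : ℚ) + 1))) *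
      (∏ k ∈ Finset.range m, ((2 * ((k : ℚ) + 1) - 2 * (m : ℚ) - 1) / 4)) =
    (-1 : ℚ) ^ m * (2 : ℚ) ^ (-(2 * (m : ℤ) ^ 2)) *
      (∏ j ∈ Finset.range m, ((2 * (j + 1) - 1)! : ℚ)) ^ 2 :=
  weyl_vector_product_general m
end

section
/- For every m ≥ 1: ∏_{1≤i<j≤m} (2m+2-i-j)/2 = 2^{-m(m-1)/2} ∏_{i=1}^{m-1} (2i+1)!/(i+1)!. -/
/-! For fixed `i`, put `n = m - 1 - i`; the factors of the inner product are `(2n + 1 - t) / 2`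
for `t < n`, so it equals `2⁻ⁿ (2n + 1)! / (n + 1)!`. Reindexing by `n` turns the outer product
into one over `n < m`, whose powers of `1/2` add up to `m(m-1)/2` and whose `n = 0` factor is `1`. -/

open Nat Finset

lemma prod_range_cast_sub_eq_factorial_div {K : Type*} [Field K] [CharZero K] {a k : ℕ}
    (hk : k ≤ a) : ∏ t ∈ range k, ((a : K) - t) = a ! / (a - k)! := by
  have hprod : ∏ t ∈ range k, ((a : K) - t) = (a.descFactorial k : K) := by
    rw [descFactorial_eq_prod_range, cast_prod]
    exact prod_congr rfl fun t ht => by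
      rw [cast_sub (by have := mem_range.1 ht; omega)]
  rw [hprod, eq_div_iff (cast_ne_zero.2 (factorial_ne_zero _)), ← cast_mul, mul_comm,
    factorial_mul_descFactorial hk]

lemma prod_filter_lt_half_sub (m i : ℕ) (hi : i < m) :
    ∏ j ∈ (range m).filter (fun j => i < j),
        ((2 * (m : ℚ) + 2 - ((i : ℚ) + 1) - ((j : ℚ) + 1)) / 2) =
      (1 / 2 : ℚ) ^ (m - 1 - i) * (((2 * (m - 1 - i) + 1)! : ℚ) / ((m - 1 - i + 1)! : ℚ)) := by
  obtain ⟨n, rfl⟩ := Nat.exists_eq_add_of_lt hi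
  have hfilter : (range (i + n + 1)).filter (fun j => i < j) = Ico (i + 1) (i + 1 + n) := by
    ext j; simp only [mem_filter, mem_range, mem_Ico]; omega
  have hterm : ∀ t ∈ range n, (2 * ((i + n + 1 : ℕ) : ℚ) + 2 - ((i : ℚ) + 1)
      - (((i + 1 + t : ℕ) : ℚ) + 1)) / 2 = (((2 * n + 1 : ℕ) : ℚ) - t) / 2 := by
    intro t _; push_cast; ring
  rw [hfilter, prod_Ico_eq_prod_range, show i + 1 + n - (i + 1) = n by omega,
    show i + n + 1 - 1 - i = n by omega, prod_congr rfl hterm, prod_div_distrib, prod_const,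
    card_range, prod_range_cast_sub_eq_factorial_div (by omega),
    show 2 * n + 1 - n = n + 1 by omega, div_eq_mul_one_div _ ((2 : ℚ) ^ n), one_div_pow]
  ring

theorem finite_product_identity_general (m : ℕ) :
    ∏ i ∈ Finset.range m, ∏ j ∈ (Finset.range m).filter (fun j => i < j),
        ((2 * (m : ℚ) + 2 - ((i : ℚ) + 1) - ((j : ℚ) + 1)) / 2) =
      (1 / 2 : ℚ) ^ (m * (m - 1) / 2) *
        ∏ i ∈ Finset.range (m - 1), (((2 * (i + 1) + 1)! : ℚ) / (((i + 1) + 1)! : ℚ)) := by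
  rw [prod_congr rfl fun i hi => prod_filter_lt_half_sub m i (mem_range.1 hi),
    prod_range_reflect (fun k => (1 / 2 : ℚ) ^ k * (((2 * k + 1)! : ℚ) / ((k + 1)! : ℚ))) m,
    prod_mul_distrib, prod_pow_eq_pow_sum, sum_range_id]
  cases m with
  | zero => simp
  | succ m => simp [prod_range_succ']

/-- For every `m ≥ 1`:
`∏_{1≤i<j≤m} (2m+2-i-j)/2 = 2^{-m(m-1)/2} ∏_{i=1}^{m-1} (2i+1)!/(i+1)!`. -/
theorem finite_product_identity (m : ℕ) (hm : 1 ≤ m) :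
    ∏ i ∈ Finset.range m, ∏ j ∈ (Finset.range m).filter (fun j => i < j),
        ((2 * (m : ℚ) + 2 - ((i : ℚ) + 1) - ((j : ℚ) + 1)) / 2) =
      (1 / 2 : ℚ) ^ (m * (m - 1) / 2) *
        ∏ i ∈ Finset.range (m - 1), (((2 * (i + 1) + 1)! : ℚ) / (((i + 1) + 1)! : ℚ)) :=
  finite_product_identity_general m
end
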